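/- The columnwise shrinkage operator solves the l_{1,2}-regularized proximal problem: for a matrix U with columns u_i and constants λ > 0, σ > 0, the matrix J whose i-th column is ((‖u_i‖₂ - λ/σ)/‖u_i‖₂)·u_i when ‖u_i‖₂ > λ/σ and 0 otherwise, is a global minimizer of f(J) = λ‖J‖_{1,2} + (σ/2)‖J - U‖_F², where ‖J‖_{1,2} = Σ_i ‖j_i‖₂ is the sum of the Euclidean norms of the columns. -/
import Mathlib


open Finset

lemma shrink_col (m : ℕ) (u j k : Fin m → ℝ) (lam sig : ℝ)
    (hlam : 0 < lam) (hsig : 0 < sig)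
    (hj : ∀ r, j r =
      if lam / sig < Real.sqrt (∑ r, (u r) ^ 2) then
        ((Real.sqrt (∑ r, (u r) ^ 2) - lam / sig) / Real.sqrt (∑ r, (u r) ^ 2)) * u r
      else 0) :
    lam * Real.sqrt (∑ r, (j r) ^ 2) + sig / 2 * ∑ r, (j r - u r) ^ 2 ≤
      lam * Real.sqrt (∑ r, (k r) ^ 2) + sig / 2 * ∑ r, (k r - u r) ^ 2 := by
  set nu := Real.sqrt (∑ r, (u r) ^ 2) with hnu
  set nk := Real.sqrt (∑ r, (k r) ^ 2) with hnk
  have hsu : (0:ℝ) ≤ ∑ r, (u r) ^ 2 := Finset.sum_nonneg fun r _ => sq_nonneg _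
  have hsk : (0:ℝ) ≤ ∑ r, (k r) ^ 2 := Finset.sum_nonneg fun r _ => sq_nonneg _
  have hnu0 : 0 ≤ nu := Real.sqrt_nonneg _
  have hnk0 : 0 ≤ nk := Real.sqrt_nonneg _
  have hnu2 : nu ^ 2 = ∑ r, (u r) ^ 2 := Real.sq_sqrt hsu
  have hnk2 : nk ^ 2 = ∑ r, (k r) ^ 2 := Real.sq_sqrt hsk
  have hcs : ∑ r, k r * u r ≤ nk * nu := by
    have h1 := Finset.sum_mul_sq_le_sq_mul_sq Finset.univ k u
    nlinarith [mul_nonneg hnk0 hnu0]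
  have hexp : ∑ r, (k r - u r) ^ 2 = nk ^ 2 - 2 * (∑ r, k r * u r) + nu ^ 2 := by
    rw [hnu2, hnk2, Finset.mul_sum, ← Finset.sum_sub_distrib, ← Finset.sum_add_distrib]
    exact Finset.sum_congr rfl fun r _ => by ring
  by_cases h : lam / sig < nu
  · -- shrink case
    have hnupos : 0 < nu := lt_trans (div_pos hlam hsig) h
    have hju : ∀ r, j r = ((nu - lam / sig) / nu) * u r := fun r => by
      rw [hj r]; simp [h]
    have hc0 : 0 ≤ (nu - lam / sig) / nu := div_nonneg (by linarith) hnu0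
    have hj2 : ∑ r, (j r) ^ 2 = ((nu - lam / sig) / nu) ^ 2 * ∑ r, (u r) ^ 2 := by
      rw [Finset.mul_sum]; exact Finset.sum_congr rfl fun r _ => by rw [hju r]; ring
    have hjn : Real.sqrt (∑ r, (j r) ^ 2) = nu - lam / sig := by
      rw [hj2, ← hnu2, Real.sqrt_mul (sq_nonneg _), Real.sqrt_sq hc0, hnu,
        Real.sqrt_sq hnu0, ← hnu, div_mul_cancel₀]
      exact ne_of_gt hnupos
    have hjd : ∑ r, (j r - u r) ^ 2 = (lam / sig) ^ 2 := by
      have : ∀ r, (j r - u r) ^ 2 = (lam / sig / nu) ^ 2 * (u r) ^ 2 := fun r => by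
        rw [hju r]; field_simp; ring
      rw [Finset.sum_congr rfl fun r _ => this r, ← Finset.mul_sum, ← hnu2]
      field_simp
    obtain ⟨t, ht⟩ : ∃ t, lam / sig = t := ⟨lam / sig, rfl⟩
    have hlt : lam = sig * t := by rw [← ht]; field_simp
    rw [hjn, hjd, hexp, ht, hlt]
    have key : 0 ≤ sig / 2 * (nk - nu + t) ^ 2 := by positivity
    have hS := mul_le_mul_of_nonneg_left hcs (le_of_lt hsig)
    nlinarith [key, hS]
  · -- zero case
    have hju : ∀ r, j r = 0 := fun r => by rw [hj r]; simp [h]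
    have hjn : Real.sqrt (∑ r, (j r) ^ 2) = 0 := by
      simp [hju]
    have hjd : ∑ r, (j r - u r) ^ 2 = nu ^ 2 := by
      rw [hnu2]; exact Finset.sum_congr rfl fun r _ => by rw [hju r]; ring
    have hle : nu ≤ lam / sig := le_of_not_gt h
    have hle' : nu * sig ≤ lam := (le_div_iff₀ hsig).mp hle
    rw [hjn, hjd, hexp]
    nlinarith [mul_nonneg hnk0 (sub_nonneg.mpr hle'), sq_nonneg nk,
      mul_le_mul_of_nonneg_left hcs (le_of_lt hsig)]


/-- The columnwise shrinkage operator solves the ℓ_{1,2}-regularized proximal problem. -/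
theorem columnwise_shrinkage_minimizes (m n : ℕ) (U : Matrix (Fin m) (Fin n) ℝ)
    (lam sig : ℝ) (hlam : 0 < lam) (hsig : 0 < sig)
    (J : Matrix (Fin m) (Fin n) ℝ)
    (hJ : ∀ (j : Fin m) (i : Fin n),
      J j i =
        if lam / sig < Real.sqrt (∑ r, (U r i) ^ 2) then
          ((Real.sqrt (∑ r, (U r i) ^ 2) - lam / sig) / Real.sqrt (∑ r, (U r i) ^ 2)) * U j i
        else 0) :
    ∀ K : Matrix (Fin m) (Fin n) ℝ,
      lam * (∑ i, Real.sqrt (∑ j, (J j i) ^ 2)) +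
          sig / 2 * (∑ j, ∑ i, (J j i - U j i) ^ 2) ≤
        lam * (∑ i, Real.sqrt (∑ j, (K j i) ^ 2)) +
          sig / 2 * (∑ j, ∑ i, (K j i - U j i) ^ 2) := by
  intro K
  rw [Finset.sum_comm (f := fun j i => (J j i - U j i) ^ 2),
    Finset.sum_comm (f := fun j i => (K j i - U j i) ^ 2)]
  simp only [Finset.mul_sum, ← Finset.sum_add_distrib]
  apply Finset.sum_le_sum
  intro i _
  simpa [Finset.mul_sum] using shrink_col m (fun r => U r i) (fun r => J r i) (fun r => K r i) lam sig hlam hsig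
    (fun r => hJ r i)
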